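/- Define ε_k := inf{ε > 0 : N(T, d, ε) ≤ 2^{2^k}} for a metric space (T, d) with finite covering numbers. Then Σ_{k=0}^∞ 2^{k/2} ε_k ≤ (√2/((√2 - 1)√(ln 2))) ∫₀^∞ √(ln N(T, d, ε)) dε. -/

import Mathlib

open Real MeasureTheory

/-- The covering number `N(T, d, ε)`: the smallest cardinality of an `ε`-net of `T`
(a subset of `T` such that every point of `T` is within distance `ε` of it). -/
noncomputable def coveringNumber {X : Type*} [MetricSpace X] (T : Set X) (ε : ℝ) : ℕ∞ :=
  ⨅ (N : Finset X) (_ : ↑N ⊆ T) (_ : ∀ t ∈ T, ∃ s ∈ N, dist t s ≤ ε), (N.card : ℕ∞)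

/-!
Stack, for every `k`, the rectangle `(0, ε_k) × [0, (1 - 2^{-1/2}) 2^{k/2} √(ln 2))`. Above a point
`ε` the heights add up, by the geometric series, to at most `2^{j/2} √(ln 2)` with `j` the largest
`k` such that `ε < ε_k`; and `ε < ε_j` forces `N(T, d, ε) > 2^{2^j}`, so this is at most
`√(ln N(T, d, ε))`. Integrating the stack gives `(1 - 2^{-1/2}) √(ln 2) Σ_k 2^{k/2} ε_k`, and
`1 / (1 - 2^{-1/2}) = √2 / (√2 - 1)`.
-/

open scoped ENNReal
open Finset Set

lemma one_sub_inv_mul_geom_sum_le {r : ℝ} (hr : 0 < r) (j : ℕ) :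
    (1 - r⁻¹) * ∑ k ∈ range (j + 1), r ^ k ≤ r ^ j := by
  have h : (1 - r⁻¹) * ∑ k ∈ range (j + 1), r ^ k = r ^ j - r⁻¹ := by
    rw [show 1 - r⁻¹ = r⁻¹ * (r - 1) by field_simp, mul_assoc, mul_comm (r - 1),
      geom_sum_mul, pow_succ]
    field_simp
  rw [h]
  exact sub_le_self _ (inv_nonneg.2 hr.le)

section StackedRectangles

variable {r c : ℝ} {e : ℕ → ℝ} {f : ℝ → ℝ≥0∞}

lemma sum_range_indicator_geom_le (hr : 1 ≤ r) (hc : 0 ≤ c)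
    (hf : ∀ k, ∀ ε ∈ Ioo 0 (e k), ENNReal.ofReal (c * r ^ k) ≤ f ε) (ε : ℝ) (n : ℕ) :
    ∑ k ∈ range n, (Ioo 0 (e k)).indicator (fun _ ↦ ENNReal.ofReal ((1 - r⁻¹) * c * r ^ k)) ε
      ≤ f ε := by
  classical
  rw [sum_indicator_eq_sum_filter]
  set s := (range n).filter (fun k ↦ ε ∈ Ioo 0 (e k))
  obtain hs | hs := s.eq_empty_or_nonempty
  · simp [hs]
  obtain ⟨j, hjs, hj_max⟩ := s.exists_max_image id hs
  have hweight : ∀ k, 0 ≤ (1 - r⁻¹) * c * r ^ k := fun k ↦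
    mul_nonneg (mul_nonneg (sub_nonneg.2 (inv_le_one_of_one_le₀ hr)) hc) (by positivity)
  calc ∑ k ∈ s, ENNReal.ofReal ((1 - r⁻¹) * c * r ^ k)
      ≤ ∑ k ∈ range (j + 1), ENNReal.ofReal ((1 - r⁻¹) * c * r ^ k) :=
        sum_le_sum_of_subset fun k hk ↦ mem_range.2 (Nat.lt_succ_of_le (hj_max k hk))
    _ = ENNReal.ofReal (c * ((1 - r⁻¹) * ∑ k ∈ range (j + 1), r ^ k)) := by
        rw [← ENNReal.ofReal_sum_of_nonneg fun k _ ↦ hweight k, mul_sum, mul_sum]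
        congr 2 with k
        ring
    _ ≤ ENNReal.ofReal (c * r ^ j) :=
        ENNReal.ofReal_le_ofReal (mul_le_mul_of_nonneg_left
          (one_sub_inv_mul_geom_sum_le (by linarith) j) hc)
    _ ≤ f ε := hf j ε (mem_filter.1 hjs).2

lemma tsum_ofReal_pow_mul_le_lintegral (hr : 1 < r) (hc : 0 < c)
    (hf : ∀ k, ∀ ε ∈ Ioo 0 (e k), ENNReal.ofReal (c * r ^ k) ≤ f ε) :
    ∑' k, ENNReal.ofReal (r ^ k * e k) ≤
      ENNReal.ofReal (r / ((r - 1) * c)) * ∫⁻ ε in Ioi 0, f ε := by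
  set w : ℕ → ℝ := fun k ↦ (1 - r⁻¹) * c * r ^ k
  have hstack : ∑' k, ENNReal.ofReal (w k) * ENNReal.ofReal (e k) ≤ ∫⁻ ε in Ioi 0, f ε :=
    calc ∑' k, ENNReal.ofReal (w k) * ENNReal.ofReal (e k)
        = ∫⁻ ε in Ioi 0, ∑' k, (Ioo 0 (e k)).indicator (fun _ ↦ ENNReal.ofReal (w k)) ε := by
          rw [lintegral_tsum fun k ↦ (measurable_const.indicator measurableSet_Ioo).aemeasurable]
          congr 1 with k
          rw [lintegral_indicator_const measurableSet_Ioo, Measure.restrict_apply measurableSet_Ioo,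
            Set.inter_eq_left.2 Set.Ioo_subset_Ioi_self, Real.volume_Ioo, sub_zero]
      _ ≤ ∫⁻ ε in Ioi 0, f ε := lintegral_mono fun ε ↦
          ENNReal.tsum_le_of_sum_range_le (sum_range_indicator_geom_le hr.le hc.le hf ε)
  have hweight : ∀ k, ENNReal.ofReal (r / ((r - 1) * c)) * ENNReal.ofReal (w k) =
      ENNReal.ofReal (r ^ k) := by
    intro k
    rw [← ENNReal.ofReal_mul (by have := sub_pos.2 hr; positivity)]
    congr 1
    have : r - 1 ≠ 0 := (sub_pos.2 hr).ne'
    simp only [w]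
    field_simp
  calc ∑' k, ENNReal.ofReal (r ^ k * e k)
      = ENNReal.ofReal (r / ((r - 1) * c)) * ∑' k, ENNReal.ofReal (w k) * ENNReal.ofReal (e k) := by
        rw [← ENNReal.tsum_mul_left]
        congr 1 with k
        rw [← mul_assoc, hweight, ENNReal.ofReal_mul (by have := hr.le; positivity)]
    _ ≤ ENNReal.ofReal (r / ((r - 1) * c)) * ∫⁻ ε in Ioi 0, f ε := by gcongr

end StackedRectangles

lemma lt_coveringNumber_of_lt_sInf {X : Type*} [MetricSpace X] {T : Set X} {n : ℕ∞} {ε : ℝ}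
    (hε : 0 < ε) (h : ε < sInf {δ : ℝ | 0 < δ ∧ coveringNumber T δ ≤ n}) :
    n < coveringNumber T ε := by
  by_contra! hle
  have hbdd : BddBelow {δ : ℝ | 0 < δ ∧ coveringNumber T δ ≤ n} := ⟨0, fun _ hδ ↦ hδ.1.le⟩
  exact (csInf_le hbdd ⟨hε, hle⟩).not_gt h

lemma sqrt_log_two_mul_sqrt_two_pow_le_sqrt_log {k : ℕ} {x : ℝ} (hx : 2 ^ 2 ^ k ≤ x) :
    √(log 2) * √2 ^ k ≤ √(log x) := by
  refine le_sqrt_of_sq_le ?_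
  rw [mul_pow, ← pow_mul, mul_comm k, pow_mul, sq_sqrt zero_le_two,
    sq_sqrt (log_nonneg one_le_two)]
  calc log 2 * (2 : ℝ) ^ k = log (2 ^ 2 ^ k) := by rw [log_pow]; push_cast; ring
    _ ≤ log x := log_le_log (by positivity) hx

/-- With `ε_k := inf{ε > 0 : N(T, d, ε) ≤ 2^(2^k)}`, one has
`Σ_k 2^{k/2} ε_k ≤ (√2/((√2 - 1)√(ln 2))) ∫₀^∞ √(ln N(T, d, ε)) dε`. -/
theorem tsum_epsk_le_entropy_integral {X : Type*} [MetricSpace X] (T : Set X)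
    (hfin : ∀ ε : ℝ, 0 < ε → coveringNumber T ε < ⊤) :
    (∑' k : ℕ, ENNReal.ofReal ((2 : ℝ) ^ ((k : ℝ) / 2) *
        sInf {ε : ℝ | 0 < ε ∧ coveringNumber T ε ≤ 2 ^ (2 ^ k)})) ≤
      ENNReal.ofReal (Real.sqrt 2 / ((Real.sqrt 2 - 1) * Real.sqrt (Real.log 2))) *
        ∫⁻ ε in Set.Ioi (0 : ℝ),
          ENNReal.ofReal (Real.sqrt (Real.log ((coveringNumber T ε).toNat))) := by
  simp_rw [rpow_div_two_eq_sqrt _ zero_le_two, Real.rpow_natCast]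
  refine tsum_ofReal_pow_mul_le_lintegral one_lt_sqrt_two (sqrt_pos.2 (log_pos one_lt_two))
    fun k ε hε ↦ ENNReal.ofReal_le_ofReal (sqrt_log_two_mul_sqrt_two_pow_le_sqrt_log ?_)
  have hlt := lt_coveringNumber_of_lt_sInf hε.1 hε.2
  rw [← ENat.natCast_toNat (hfin ε hε.1).ne] at hlt
  exact_mod_cast hlt.le
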